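/- Let g₁,…,g_m be non-decreasing, right-continuous, unbounded functions on [0,∞) with gᵢ(0)=0 and gᵢ(t)>0 for t>0. Define f := Σᵢ gᵢ⁻¹, κ := f⁻¹, γᵢ := gᵢ⁻¹ ∘̃ κ. Then for every s ≥ 0 and every i ∈ [m], κ(s) ∈ [gᵢ(γᵢ(s)−), gᵢ(γᵢ(s))]. In particular, if each gᵢ is continuous at γᵢ(s), then g₁(γ₁(s)) = g₂(γ₂(s)) = ⋯ = g_m(γ_m(s)) = κ(s). -/

import Mathlib

open Set Function Filter

/-- Right-continuous generalized inverse: `h⁻¹(s) = inf {u > 0 : h(u) > s}`. -/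
noncomputable def ginv (h : ℝ → ℝ) (s : ℝ) : ℝ := sInf {u : ℝ | 0 < u ∧ s < h u}

/-- Left limit of a function monotone on `[0,∞)`, with the convention `h(0−) = h(0)`. -/
noncomputable def llim (h : ℝ → ℝ) (u : ℝ) : ℝ :=
  if u ≤ 0 then h 0 else sSup (h '' Set.Ico 0 u)

/-- Right-continuity on `[0,∞)`. -/
def RightCts (h : ℝ → ℝ) : Prop := ∀ x : ℝ, 0 ≤ x → ContinuousWithinAt h (Set.Ici x) x

/-- The class `D₀↑↑(ℝ₊)`: non-decreasing, right-continuous, `h 0 = 0`, strictly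
positive on `(0,∞)`, and unbounded. -/
def Dpp (h : ℝ → ℝ) : Prop :=
  MonotoneOn h (Set.Ici 0) ∧ RightCts h ∧ h 0 = 0 ∧ (∀ t : ℝ, 0 < t → 0 < h t) ∧
    (∀ M : ℝ, ∃ t : ℝ, 0 ≤ t ∧ M < h t)

/-- `h` jumps at `u`: `h(u−) < h(u)`. -/
noncomputable def JumpAt (h : ℝ → ℝ) (u : ℝ) : Prop := llim h u < h u

/-- Compatibility condition (H1): whenever `g` jumps at `u`, the level set
`{r ≥ 0 : κ r = u}` has positive length. -/
def H1 (g κ : ℝ → ℝ) : Prop :=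
  ∀ u : ℝ, JumpAt g u → ∃ r₁ r₂ : ℝ, 0 ≤ r₁ ∧ r₁ < r₂ ∧ κ r₁ = u ∧ κ r₂ = u

/-- Compatibility condition (H2): whenever `κ(s−) < κ(s)`, `g(κ(s−)) = g(κ(s)−)`. -/
def H2 (g κ : ℝ → ℝ) : Prop :=
  ∀ s : ℝ, 0 ≤ s → llim κ s < κ s → g (llim κ s) = llim g (κ s)

-- Smooth composition `g ∘̃ κ`: equal to `g ∘ κ` outside the intervals
-- `[κ⁻¹(u−), κ⁻¹(u)]` over jump points `u` of `g`, and on each such interval the linear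
-- interpolation between `(κ⁻¹(u−), g(u−))` and `(κ⁻¹(u), g(u))`.
open scoped Classical in
noncomputable def stilde (g κ : ℝ → ℝ) (s : ℝ) : ℝ :=
  if h : ∃ u : ℝ, JumpAt g u ∧ s ∈ Set.Icc (llim (ginv κ) u) (ginv κ u) then
    let u := Classical.choose h
    llim g u + (g u - llim g u) * (s - llim (ginv κ) u) / (ginv κ u - llim (ginv κ) u)
  else g (κ s)

/-!
Write `Gᵢ = gᵢ⁻¹` and `t = κ(s)`. For a non-decreasing right-continuous `g` with inverse `G`,
jump intervals correspond: `x ∈ [G(t−), G(t)]` implies `t ∈ [g(x−), g(x)]`. It therefore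
suffices to show `γᵢ(s) ∈ [Gᵢ(t−), Gᵢ(t)]`. Off the interpolation intervals `γᵢ(s) = Gᵢ(t)`.
Over a jump `u` of `Gᵢ` we have `κ⁻¹ = f` (as `f` is right-continuous), so `s ∈ [f(u−), f(u)]`,
a nondegenerate interval because a jump of the summand `Gᵢ` is a jump of `f`; `γᵢ(s)`
interpolates within `[Gᵢ(u−), Gᵢ(u)]`. Finally `t ≥ u`, and `t > u` forces `s = f(u)`, i.e.
`γᵢ(s) = Gᵢ(u)`, with `f`, hence `Gᵢ`, flat on `[u, t)`.
-/

open Topology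

section GeneralizedInverse

variable {h : ℝ → ℝ} {s t u v x : ℝ}

theorem ginv_nonneg (h : ℝ → ℝ) (s : ℝ) : 0 ≤ ginv h s :=
  Real.sInf_nonneg fun _ hu => hu.1.le

theorem ginv_le (hv : 0 < v) (hsv : s < h v) : ginv h s ≤ v :=
  csInf_le ⟨0, fun _ hu => hu.1.le⟩ ⟨hv, hsv⟩

theorem le_of_lt_ginv (hv : 0 < v) (hvs : v < ginv h s) : h v ≤ s :=
  not_lt.1 fun hsv => (ginv_le hv hsv).not_gt hvs

theorem le_ginv (hunb : ∃ u, 0 < u ∧ s < h u) (hx : ∀ v, 0 < v → s < h v → x ≤ v) :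
    x ≤ ginv h s :=
  le_csInf hunb fun v hv => hx v hv.1 hv.2

theorem Dpp.exists_pos_lt (hh : Dpp h) (s : ℝ) : ∃ u, 0 < u ∧ s < h u := by
  obtain ⟨_, _, h0, _, hunb⟩ := hh
  obtain ⟨u, hu, hsu⟩ := hunb (max s 0)
  refine ⟨u, hu.lt_of_ne ?_, (le_max_left s 0).trans_lt hsu⟩
  rintro rfl
  rw [h0] at hsu
  exact (le_max_right s 0).not_gt hsu

theorem ginv_monotone (hunb : ∀ s, ∃ u, 0 < u ∧ s < h u) : Monotone (ginv h) :=
  fun _ t hst => le_ginv (hunb t) fun _ hv htv => ginv_le hv (hst.trans_lt htv)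

theorem ginv_zero (hpos : ∀ t, 0 < t → 0 < h t) : ginv h 0 = 0 := by
  have hS : {u : ℝ | 0 < u ∧ 0 < h u} = Ioi 0 :=
    Set.ext fun u => ⟨And.left, fun hu => ⟨hu, hpos u hu⟩⟩
  rw [ginv, hS, csInf_Ioi]

theorem ginv_rightCts (hunb : ∀ s, ∃ u, 0 < u ∧ s < h u) : RightCts (ginv h) := by
  intro x _
  refine tendsto_order.2 ⟨fun l hl => ?_, fun U hU => ?_⟩
  · filter_upwards [self_mem_nhdsWithin] with v hv
    exact hl.trans_le (ginv_monotone hunb hv)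
  · obtain ⟨w, ⟨hw, hxw⟩, hwU⟩ := exists_lt_of_csInf_lt (hunb x) hU
    have hx : x ∈ Ico x ((x + h w) / 2) := ⟨le_rfl, by linarith⟩
    filter_upwards [Ico_mem_nhdsGE_of_mem hx] with v hv
    exact (ginv_le hw (by linarith [hv.2])).trans_lt hwU

theorem lt_ginv_of_apply_lt (hmono : MonotoneOn h (Ici 0)) (hrc : RightCts h)
    (hunb : ∀ s, ∃ u, 0 < u ∧ s < h u) (hx : 0 ≤ x) (hxv : h x < v) : x < ginv h v := by
  obtain ⟨x', hxx', hsub⟩ :=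
    mem_nhdsGE_iff_exists_Ico_subset.1 ((hrc x hx).eventually_lt_const hxv)
  refine lt_of_lt_of_le hxx' (le_ginv (hunb v) fun w hw hvw => ?_)
  by_contra! hwx'
  rcases le_or_gt x w with hxw | hwx
  · exact (hsub ⟨hxw, hwx'⟩ : h w < v).not_gt hvw
  · exact (hmono hw.le hx hwx.le).not_gt (hxv.trans hvw)

theorem ginv_exists_pos_lt (hmono : MonotoneOn h (Ici 0)) (hunb : ∀ s, ∃ u, 0 < u ∧ s < h u)
    (s : ℝ) : ∃ u, 0 < u ∧ s < ginv h u := by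
  set w := max s 0 + 1
  have hw : 0 < w := by positivity
  have hsw : s < w := by linarith [le_max_left s 0]
  refine ⟨max (h w + 1) 1, by positivity, hsw.trans_le ?_⟩
  refine le_ginv (hunb _) fun v hv hwv => not_lt.1 fun hvw => ?_
  have := hmono hv.le hw.le hvw.le
  linarith [le_max_left (h w + 1) 1]

theorem ginv_ginv (hmono : MonotoneOn h (Ici 0)) (hrc : RightCts h) (h0 : h 0 = 0)
    (hunb : ∀ s, ∃ u, 0 < u ∧ s < h u) (ht : 0 ≤ t) : ginv (ginv h) t = h t := by
  have hht : 0 ≤ h t := h0 ▸ hmono self_mem_Ici ht ht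
  refine le_antisymm (le_of_forall_gt_imp_ge_of_dense fun w hw => ?_) ?_
  · exact ginv_le (hht.trans_lt hw) (lt_ginv_of_apply_lt hmono hrc hunb ht hw)
  · refine le_ginv (ginv_exists_pos_lt hmono hunb t) fun v hv htv => ?_
    rcases ht.eq_or_lt with rfl | ht
    · rw [h0]
      exact hv.le
    · exact le_of_lt_ginv ht htv

end GeneralizedInverse

section LeftLimit

variable {h : ℝ → ℝ} {c u v : ℝ}

theorem apply_le_llim (hmono : MonotoneOn h (Ici 0)) (hv : 0 ≤ v) (hvu : v < u) :
    h v ≤ llim h u := by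
  rw [llim, if_neg (not_le.2 (hv.trans_lt hvu))]
  refine le_csSup ⟨h u, ?_⟩ ⟨v, ⟨hv, hvu⟩, rfl⟩
  rintro _ ⟨w, hw, rfl⟩
  exact hmono hw.1 (hw.1.trans hw.2.le) hw.2.le

theorem apply_zero_le_llim (hmono : MonotoneOn h (Ici 0)) : h 0 ≤ llim h u := by
  rcases le_or_gt u 0 with hu | hu
  · rw [llim, if_pos hu]
  · exact apply_le_llim hmono le_rfl hu

theorem llim_le (h0 : h 0 ≤ c) (hle : ∀ v, 0 < v → v < u → h v ≤ c) : llim h u ≤ c := by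
  rw [llim]
  split_ifs with hu
  · exact h0
  · refine csSup_le ⟨h 0, 0, ⟨le_rfl, not_le.1 hu⟩, rfl⟩ ?_
    rintro _ ⟨w, ⟨hw, hwu⟩, rfl⟩
    rcases hw.eq_or_lt with rfl | hw
    · exact h0
    · exact hle w hw hwu

theorem llim_le_self (hmono : MonotoneOn h (Ici 0)) (hu : 0 ≤ u) : llim h u ≤ h u :=
  llim_le (hmono self_mem_Ici hu hu) fun _ hv hvu => hmono hv.le hu hvu.le

theorem llim_congr {h' : ℝ → ℝ} (heq : EqOn h h' (Ici 0)) : llim h = llim h' := by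
  funext u
  rw [llim, llim, heq self_mem_Ici, image_congr fun w hw => heq hw.1]

theorem JumpAt.pos (hmono : Monotone h) (hu : JumpAt h u) : 0 < u := by
  by_contra! hu0
  rw [JumpAt, llim, if_pos hu0] at hu
  exact hu.not_ge (hmono hu0)

theorem JumpAt.of_monotone_sub {F G : ℝ → ℝ} (hG : Monotone G) (hFG : Monotone (F - G))
    (hu : JumpAt G u) : JumpAt F u := by
  have hu0 := hu.pos hG
  have hF : ∀ v, F v = G v + (F - G) v := fun v => by simp
  refine lt_of_le_of_lt (llim_le (c := llim G u + (F - G) u) ?_ fun v hv hvu => ?_) ?_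
  · rw [hF]
    exact add_le_add (apply_zero_le_llim (hG.monotoneOn _)) (hFG hu0.le)
  · rw [hF]
    exact add_le_add (apply_le_llim (hG.monotoneOn _) hv.le hvu) (hFG hvu.le)
  · rw [hF u]
    exact add_lt_add_left hu _

end LeftLimit

theorem mem_Icc_llim_of_mem_Icc_llim_ginv {g : ℝ → ℝ} {t x : ℝ}
    (hmono : MonotoneOn g (Ici 0)) (hrc : RightCts g) (h0 : g 0 = 0)
    (hunb : ∀ s, ∃ u, 0 < u ∧ s < g u) (ht : 0 ≤ t)
    (hx : x ∈ Icc (llim (ginv g) t) (ginv g t)) : t ∈ Icc (llim g x) (g x) := by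
  have hG := (ginv_monotone hunb).monotoneOn (Ici 0)
  refine ⟨llim_le (h0.trans_le ht) fun v hv hvx => le_of_lt_ginv hv (hvx.trans_le hx.2),
    not_lt.1 fun hxt => ?_⟩
  have hx0 : 0 ≤ x := (ginv_nonneg g 0).trans ((apply_zero_le_llim hG).trans hx.1)
  have hgx : 0 ≤ g x := h0 ▸ hmono self_mem_Ici hx0 hx0
  obtain ⟨v, hxv, hvt⟩ := exists_between hxt
  have hxGv := lt_ginv_of_apply_lt hmono hrc hunb hx0 hxv
  have hGv := apply_le_llim hG (hgx.trans hxv.le) hvt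
  linarith [hx.1]

theorem add_mul_div_mem_Icc {a b c d s : ℝ} (hab : a < b) (hs : s ∈ Icc a b) (hcd : c ≤ d) :
    c + (d - c) * (s - a) / (b - a) ∈ Icc c d := by
  have hθ0 : 0 ≤ (s - a) / (b - a) := div_nonneg (by linarith [hs.1]) (by linarith)
  have hθ1 : (s - a) / (b - a) ≤ 1 := (div_le_one (by linarith)).2 (by linarith [hs.2])
  rw [mul_div_assoc]
  constructor <;> nlinarith

section SmoothComposition

variable {F G : ℝ → ℝ} {s u : ℝ}

theorem stilde_jump_mem_Icc (hG : Monotone G) (hFG : Monotone (F - G))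
    (hunb : ∀ s, ∃ u, 0 < u ∧ s < F u) (hu : JumpAt G u) (hs : s ∈ Icc (llim F u) (F u)) :
    llim G u + (G u - llim G u) * (s - llim F u) / (F u - llim F u) ∈
      Icc (llim G (ginv F s)) (G (ginv F s)) := by
  have hF : Monotone F := by simpa using hG.add hFG
  have hu0 := hu.pos hG
  have hFu : llim F u < F u := hu.of_monotone_sub hG hFG
  have hut : u ≤ ginv F s := le_ginv (hunb s) fun v hv hsv => not_lt.1 fun hvu =>
    (apply_le_llim (hF.monotoneOn _) hv.le hvu).not_gt (hs.1.trans_lt hsv)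
  rcases hut.eq_or_lt with hut | hut
  · rw [← hut]
    exact add_mul_div_mem_Icc hFu hs hu.le
  -- Past `u`, `F` stays below `s` up to `ginv F s`: so `s = F u`, and `G` is flat there.
  have hsFu : s = F u := by
    obtain ⟨w, huw, hwt⟩ := exists_between hut
    exact le_antisymm hs.2 ((hF huw.le).trans (le_of_lt_ginv (hu0.trans huw) hwt))
  have hθ : s - llim F u = F u - llim F u := by rw [hsFu]
  rw [hθ, mul_div_assoc, div_self (sub_pos.2 hFu).ne', mul_one, add_sub_cancel]
  refine ⟨llim_le (hG hu0.le) fun w hw hwt => ?_, hG hut.le⟩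
  rcases le_or_gt w u with hwu | hwu
  · exact hG hwu
  · have hsum : (F - G) u ≤ (F - G) w := hFG hwu.le
    simp only [Pi.sub_apply] at hsum
    linarith [le_of_lt_ginv hw hwt]

theorem exists_stilde_eq_of_jump {g κ : ℝ → ℝ} {s : ℝ}
    (H : ∃ u, JumpAt g u ∧ s ∈ Icc (llim (ginv κ) u) (ginv κ u)) :
    ∃ u, JumpAt g u ∧ s ∈ Icc (llim (ginv κ) u) (ginv κ u) ∧ stilde g κ s =
      llim g u + (g u - llim g u) * (s - llim (ginv κ) u) / (ginv κ u - llim (ginv κ) u) :=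
  ⟨H.choose, H.choose_spec.1, H.choose_spec.2, by rw [stilde, dif_pos H]⟩

theorem stilde_eq_of_not_jump {g κ : ℝ → ℝ} {s : ℝ}
    (H : ¬∃ u, JumpAt g u ∧ s ∈ Icc (llim (ginv κ) u) (ginv κ u)) :
    stilde g κ s = g (κ s) := by
  rw [stilde, dif_neg H]

theorem stilde_ginv_mem_Icc (hG : Monotone G) (hFG : Monotone (F - G)) (hrc : RightCts F)
    (h0 : F 0 = 0) (hunb : ∀ s, ∃ u, 0 < u ∧ s < F u) (s : ℝ) :
    stilde G (ginv F) s ∈ Icc (llim G (ginv F s)) (G (ginv F s)) := by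
  have hF : Monotone F := by simpa using hG.add hFG
  have hinv : EqOn (ginv (ginv F)) F (Ici 0) := fun t ht =>
    ginv_ginv (hF.monotoneOn _) hrc h0 hunb ht
  by_cases H : ∃ u, JumpAt G u ∧ s ∈ Icc (llim (ginv (ginv F)) u) (ginv (ginv F) u)
  · obtain ⟨u, hu, hs, heq⟩ := exists_stilde_eq_of_jump H
    rw [heq]
    rw [llim_congr hinv, hinv (hu.pos hG).le] at hs ⊢
    exact stilde_jump_mem_Icc hG hFG hunb hu hs
  · rw [stilde_eq_of_not_jump H]
    exact ⟨llim_le_self (hG.monotoneOn _) (ginv_nonneg F s), le_rfl⟩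

end SmoothComposition

section SumOfInverses

variable {ι : Type*} [Fintype ι] {g : ι → ℝ → ℝ}

theorem monotone_sum_ginv_sub (hunb : ∀ j s, ∃ u, 0 < u ∧ s < g j u) (i : ι) :
    Monotone ((fun s => ∑ j, ginv (g j) s) - ginv (g i)) := by
  classical
  have hsub : (fun s => ∑ j, ginv (g j) s) - ginv (g i) =
      fun s => ∑ j ∈ Finset.univ.erase i, ginv (g j) s := by
    funext s
    simp [Finset.sum_erase_eq_sub (Finset.mem_univ i)]
  rw [hsub]
  exact fun a b hab => Finset.sum_le_sum fun j _ => ginv_monotone (hunb j) hab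

theorem rightCts_sum_ginv (hunb : ∀ j s, ∃ u, 0 < u ∧ s < g j u) :
    RightCts fun s => ∑ j, ginv (g j) s :=
  fun x hx => tendsto_finsetSum _ fun j _ => ginv_rightCts (hunb j) x hx

theorem exists_pos_lt_sum_ginv (hunb : ∀ j s, ∃ u, 0 < u ∧ s < g j u) {i : ι}
    (hmono : MonotoneOn (g i) (Ici 0)) (s : ℝ) : ∃ u, 0 < u ∧ s < ∑ j, ginv (g j) u := by
  obtain ⟨u, hu, hsu⟩ := ginv_exists_pos_lt hmono (hunb i) s
  exact ⟨u, hu, hsu.trans_le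
    (Finset.single_le_sum (fun j _ => ginv_nonneg (g j) u) (Finset.mem_univ i))⟩

end SumOfInverses

/-- `κ(s) ∈ [gᵢ(γᵢ(s)−), gᵢ(γᵢ(s))]` for all `i`; if each `gᵢ` is continuous at
`γᵢ(s)` then all `gᵢ(γᵢ(s))` coincide with `κ(s)`. -/
theorem stmt13 (m : ℕ) (g : Fin m → ℝ → ℝ) (hg : ∀ i, Dpp (g i))
    (f κ : ℝ → ℝ) (γ : Fin m → ℝ → ℝ)
    (hf : f = fun s => ∑ j, ginv (g j) s) (hκ : κ = ginv f)
    (hγ : ∀ i, γ i = stilde (ginv (g i)) κ) :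
    ∀ s : ℝ, 0 ≤ s →
      (∀ i, κ s ∈ Set.Icc (llim (g i) (γ i s)) (g i (γ i s))) ∧
      ((∀ i, llim (g i) (γ i s) = g i (γ i s)) → ∀ i, g i (γ i s) = κ s) := by
  intro s _
  have hunb : ∀ j s, ∃ u, 0 < u ∧ s < g j u := fun j => (hg j).exists_pos_lt
  have hf0 : f 0 = 0 := by
    rw [hf]
    exact Finset.sum_eq_zero fun j _ => ginv_zero (hg j).2.2.2.1
  have key : ∀ i, κ s ∈ Icc (llim (g i) (γ i s)) (g i (γ i s)) := by
    intro i
    obtain ⟨hmono, hrc, h0, -, -⟩ := hg i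
    have hγs : γ i s ∈ Icc (llim (ginv (g i)) (κ s)) (ginv (g i) (κ s)) := by
      rw [hγ i, hκ]
      refine stilde_ginv_mem_Icc (ginv_monotone (hunb i)) ?_ ?_ hf0 ?_ s <;> rw [hf]
      exacts [monotone_sum_ginv_sub hunb i, rightCts_sum_ginv hunb,
        exists_pos_lt_sum_ginv hunb hmono]
    exact mem_Icc_llim_of_mem_Icc_llim_ginv hmono hrc h0 (hunb i) (hκ ▸ ginv_nonneg f s) hγs
  exact ⟨key, fun hcont i => le_antisymm ((hcont i).symm.trans_le (key i).1) (key i).2⟩
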